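/- arXiv:2304.03690 — 2 statements merged into one kernel-verified Lean document; each statement's English description precedes it below -/
import Mathlib

section
/- Let p, q be positive integers, let B be a real p×q matrix such that the linear map x ↦ B·x on ℝ^q has trivial kernel, let Φ be an invertible real q×q matrix, let Ψ and 𝒜uu be real q×q matrices, and let 𝒜uσ be a real q×p matrix. Set 𝒜σσ := B·Φ·𝒜uσ and 𝒜σu := B·Ψ. Suppose the vectors σ, σ* ∈ ℝ^p and u, u* ∈ ℝ^q satisfy the first component of the upwind-flux equality, namely B·u* = B·u + 𝒜σσ·(σ − σ*) + 𝒜σu·(u − u*). Then, with the stabilization matrix T := −(Φᵀ·Bᵀ·B·Φ)⁻¹·Φᵀ·Bᵀ·B·(Ψ + I) + 𝒜uu, one has 𝒜uσ·(σ − σ*) + 𝒜uu·(u − u*) = T·(u − u*). In particular, the second component of the upwind numerical flux, Bᵀσ + C·u + 𝒜uσ·(σ − σ*) + 𝒜uu·(u − u*), equals the reduced form Bᵀσ + C·u + T·(u − u*). -/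
/-!
Write `w = σ - σ*`, `v = u - u*` and `A = B Φ`. The flux equation says `A (𝒜uσ w) = -B (Ψ + I) v`,
so `𝒜uσ w` solves a linear system whose normal equations `AᵀA x = Aᵀ y` have the invertible
matrix `AᵀA = ΦᵀBᵀBΦ` (as `A` is injective); solving them gives `𝒜uσ w = -(AᵀA)⁻¹ AᵀB (Ψ + I) v`,
which is the stabilization term of `T`.
-/

open Matrix

namespace Matrix

variable {m n R : Type*} [Fintype m] [Fintype n] [DecidableEq n]

theorem isUnit_transpose_mul_self [Field R] [LinearOrder R] [IsStrictOrderedRing R]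
    {A : Matrix m n R} (hA : Function.Injective A.mulVec) : IsUnit (Aᵀ * A) := by
  have hker : LinearMap.ker (Aᵀ * A).mulVecLin = ⊥ := by
    rw [ker_mulVecLin_transpose_mul_self]
    exact LinearMap.ker_eq_bot.mpr hA
  exact mulVec_injective_iff_isUnit.mp (LinearMap.ker_eq_bot.mp hker)

theorem eq_inv_transpose_mul_self_mul_transpose_mulVec [CommRing R] {A : Matrix m n R}
    (hA : IsUnit (Aᵀ * A)) {x : n → R} {y : m → R} (h : A *ᵥ x = y) :
    x = ((Aᵀ * A)⁻¹ * Aᵀ) *ᵥ y := by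
  rw [← h, mulVec_mulVec, Matrix.mul_assoc, nonsing_inv_mul _ ((isUnit_iff_isUnit_det _).mp hA),
    one_mulVec]

end Matrix

theorem reduced_upwind_flux_general (p q : ℕ)
    (B : Matrix (Fin p) (Fin q) ℝ)
    (hB : ∀ x : Fin q → ℝ, B.mulVec x = 0 → x = 0)
    (Φ Ψ Auu : Matrix (Fin q) (Fin q) ℝ) (hΦ : IsUnit Φ)
    (Auσ : Matrix (Fin q) (Fin p) ℝ)
    (σ σs : Fin p → ℝ) (u us : Fin q → ℝ)
    (hflux : B.mulVec us =
      B.mulVec u + (B * Φ * Auσ).mulVec (σ - σs) + (B * Ψ).mulVec (u - us)) :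
    Auσ.mulVec (σ - σs) + Auu.mulVec (u - us) =
      (-((Φᵀ * Bᵀ * B * Φ)⁻¹ * (Φᵀ * Bᵀ * B * (Ψ + 1))) + Auu).mulVec (u - us) ∧
    ∀ C : Matrix (Fin q) (Fin q) ℝ,
      Bᵀ.mulVec σ + C.mulVec u + Auσ.mulVec (σ - σs) + Auu.mulVec (u - us) =
      Bᵀ.mulVec σ + C.mulVec u +
        (-((Φᵀ * Bᵀ * B * Φ)⁻¹ * (Φᵀ * Bᵀ * B * (Ψ + 1))) + Auu).mulVec (u - us) := by
  have hB_inj : Function.Injective B.mulVec := fun x y h =>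
    sub_eq_zero.mp (hB _ (by rw [mulVec_sub, h, sub_self]))
  have hBΦ_inj : Function.Injective (B * Φ).mulVec := fun x y h =>
    mulVec_injective_iff_isUnit.mpr hΦ (hB_inj (by simpa only [mulVec_mulVec] using h))
  have hsystem : (B * Φ) *ᵥ (Auσ *ᵥ (σ - σs)) = B *ᵥ -((Ψ + 1) *ᵥ (u - us)) := by
    rw [mulVec_mulVec, mulVec_neg, add_mulVec, one_mulVec, mulVec_add, mulVec_mulVec,
      mulVec_sub B u us, hflux]
    abel
  have hsolve := eq_inv_transpose_mul_self_mul_transpose_mulVec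
    (isUnit_transpose_mul_self hBΦ_inj) hsystem
  have hfirst : Auσ *ᵥ (σ - σs) + Auu *ᵥ (u - us) =
      (-((Φᵀ * Bᵀ * B * Φ)⁻¹ * (Φᵀ * Bᵀ * B * (Ψ + 1))) + Auu) *ᵥ (u - us) := by
    have hnormal : (B * Φ)ᵀ * (B * Φ) = Φᵀ * Bᵀ * B * Φ := by
      rw [transpose_mul, ← Matrix.mul_assoc]
    rw [hsolve, hnormal, transpose_mul, mulVec_neg, mulVec_mulVec, mulVec_neg, mulVec_mulVec,
      ← neg_mulVec, ← add_mulVec]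
    simp only [Matrix.mul_assoc]
  exact ⟨hfirst, fun C => by rw [add_assoc, hfirst]⟩

/-- Reduced upwind flux for two-field Friedrichs' systems under assumption (F1). -/
theorem reduced_upwind_flux (p q : ℕ) (hp : 0 < p) (hq : 0 < q)
    (B : Matrix (Fin p) (Fin q) ℝ)
    (hB : ∀ x : Fin q → ℝ, B.mulVec x = 0 → x = 0)
    (Φ Ψ Auu : Matrix (Fin q) (Fin q) ℝ) (hΦ : IsUnit Φ)
    (Auσ : Matrix (Fin q) (Fin p) ℝ)
    (σ σs : Fin p → ℝ) (u us : Fin q → ℝ)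
    (hflux : B.mulVec us =
      B.mulVec u + (B * Φ * Auσ).mulVec (σ - σs) + (B * Ψ).mulVec (u - us)) :
    Auσ.mulVec (σ - σs) + Auu.mulVec (u - us) =
      (-((Φᵀ * Bᵀ * B * Φ)⁻¹ * (Φᵀ * Bᵀ * B * (Ψ + 1))) + Auu).mulVec (u - us) ∧
    ∀ C : Matrix (Fin q) (Fin q) ℝ,
      Bᵀ.mulVec σ + C.mulVec u + Auσ.mulVec (σ - σs) + Auu.mulVec (u - us) =
      Bᵀ.mulVec σ + C.mulVec u +
        (-((Φᵀ * Bᵀ * B * Φ)⁻¹ * (Φᵀ * Bᵀ * B * (Ψ + 1))) + Auu).mulVec (u - us) :=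
  reduced_upwind_flux_general p q B hB Φ Ψ Auu hΦ Auσ σ σs u us hflux
end

section
/- Let d ≥ 1, let n ∈ ℝ^d be a unit vector (Σ_k n_k² = 1), and let b ∈ ℝ. Define the real (d+1)×(d+1) block matrices A := [[0_{d×d}, n], [nᵀ, b]] and M := (1/√(b²+4)) · [[2·n·nᵀ, b·n], [b·nᵀ, b²+2]], where n·nᵀ is the d×d rank-one matrix with entries n_i n_j. Then M is positive semidefinite and M² = A²; that is, M is the matrix absolute value |A| of A. -/
open Matrix

/-- The boundary coefficient matrix `A = [[0, n], [nᵀ, b]]` of the convection–diffusion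
two-field Friedrichs' system, for a unit normal `n` and normal velocity `b`. -/
noncomputable def convDiffA (d : ℕ) (n : Fin d → ℝ) (b : ℝ) :
    Matrix (Fin d ⊕ Fin 1) (Fin d ⊕ Fin 1) ℝ :=
  Matrix.fromBlocks 0 (Matrix.of fun i _ => n i) (Matrix.of fun _ j => n j)
    (Matrix.of fun _ _ => b)

/-- The candidate matrix absolute value
`M = (1/√(b²+4)) [[2 n nᵀ, b n], [b nᵀ, b² + 2]]`. -/
noncomputable def convDiffM (d : ℕ) (n : Fin d → ℝ) (b : ℝ) :
    Matrix (Fin d ⊕ Fin 1) (Fin d ⊕ Fin 1) ℝ :=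
  (1 / Real.sqrt (b ^ 2 + 4)) •
    Matrix.fromBlocks ((2 : ℝ) • Matrix.vecMulVec n n) (b • Matrix.of fun i _ => n i)
      (b • Matrix.of fun _ j => n j) (Matrix.of fun _ _ => b ^ 2 + 2)

/-- A real outer product `v vᵀ` is positive semidefinite. -/
lemma vecMulVec_posSemidef {ι : Type*} [Fintype ι] [DecidableEq ι] (v : ι → ℝ) :
    (Matrix.vecMulVec v v).PosSemidef := by
  rw [Matrix.posSemidef_iff_dotProduct_mulVec]
  constructor
  · ext i j
    simp [Matrix.conjTranspose_apply, Matrix.vecMulVec_apply, mul_comm]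
  · intro x
    have key : star x ⬝ᵥ Matrix.vecMulVec v v *ᵥ x = (∑ i, v i * x i) ^ 2 := by
      simp only [star_trivial, dotProduct, mulVec, Matrix.vecMulVec_apply]
      rw [sq, Finset.sum_mul]
      refine Finset.sum_congr rfl fun i _ => ?_
      rw [Finset.mul_sum, Finset.mul_sum]
      exact Finset.sum_congr rfl fun j _ => by ring
    rw [key]
    positivity

/-- A nonnegative scalar multiple of a real PSD matrix is PSD. -/
lemma posSemidef_smul {ι : Type*} [Fintype ι] {c : ℝ} (hc : 0 ≤ c)
    {M : Matrix ι ι ℝ} (hM : M.PosSemidef) : (c • M).PosSemidef := by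
  rw [Matrix.posSemidef_iff_dotProduct_mulVec]
  constructor
  · have := hM.1
    simp only [Matrix.IsHermitian] at this ⊢
    rw [Matrix.conjTranspose_smul, this, star_trivial]
  · intro x
    rw [Matrix.smul_mulVec, dotProduct_smul, smul_eq_mul]
    exact mul_nonneg hc (hM.dotProduct_mulVec_nonneg x)

/-- For a unit normal `n` and `b ∈ ℝ`, the matrix
`M = (1/√(b²+4)) [[2 n nᵀ, b n], [b nᵀ, b² + 2]]` is positive semidefinite and satisfies
`M² = A²`, i.e. `M` is the matrix absolute value `|A|` of `A = [[0, n], [nᵀ, b]]`. -/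
theorem convDiff_abs (d : ℕ) (hd : 1 ≤ d) (n : Fin d → ℝ) (hn : ∑ k, n k ^ 2 = 1)
    (b : ℝ) :
    (convDiffM d n b).PosSemidef ∧
      convDiffM d n b * convDiffM d n b = convDiffA d n b * convDiffA d n b := by
  have h4 : (0:ℝ) < b ^ 2 + 4 := by positivity
  set s := Real.sqrt (b ^ 2 + 4) with hsdef
  have hs2 : s ^ 2 = b ^ 2 + 4 := Real.sq_sqrt h4.le
  have hspos : 0 < s := Real.sqrt_pos.mpr h4
  have hs0 : s ≠ 0 := hspos.ne'
  -- entry lemmas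
  have M11 : ∀ i j, convDiffM d n b (Sum.inl i) (Sum.inl j) = 1 / s * (2 * (n i * n j)) := by
    intro i j; simp [convDiffM, vecMulVec_apply, hsdef]
  have M12 : ∀ i (j : Fin 1), convDiffM d n b (Sum.inl i) (Sum.inr j) = 1 / s * (b * n i) := by
    intro i j; simp [convDiffM, hsdef]
  have M21 : ∀ (i : Fin 1) j, convDiffM d n b (Sum.inr i) (Sum.inl j) = 1 / s * (b * n j) := by
    intro i j; simp [convDiffM, hsdef]
  have M22 : ∀ (i j : Fin 1), convDiffM d n b (Sum.inr i) (Sum.inr j) = 1 / s * (b ^ 2 + 2) := by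
    intro i j; simp [convDiffM, hsdef]
  have A11 : ∀ i j, convDiffA d n b (Sum.inl i) (Sum.inl j) = 0 := by
    intro i j; simp [convDiffA]
  have A12 : ∀ i (j : Fin 1), convDiffA d n b (Sum.inl i) (Sum.inr j) = n i := by
    intro i j; simp [convDiffA]
  have A21 : ∀ (i : Fin 1) j, convDiffA d n b (Sum.inr i) (Sum.inl j) = n j := by
    intro i j; simp [convDiffA]
  have A22 : ∀ (i j : Fin 1), convDiffA d n b (Sum.inr i) (Sum.inr j) = b := by
    intro i j; simp [convDiffA]
  have hmul : ∀ X Y : ℝ, (1 / s * X) * (1 / s * Y) = X * Y / (b ^ 2 + 4) := by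
    have hinv : 1 / s * (1 / s) = 1 / (b ^ 2 + 4) := by
      rw [div_mul_div_comm, one_mul, ← sq, hs2]
    intro X Y
    calc 1 / s * X * (1 / s * Y) = 1 / s * (1 / s) * (X * Y) := by ring
      _ = X * Y / (b ^ 2 + 4) := by rw [hinv]; ring
  constructor
  · -- positive semidefiniteness via a rank-one decomposition
    set v : Fin d ⊕ Fin 1 → ℝ := Sum.elim (fun i => 2 * n i) (fun _ => b) with hv
    set e : Fin d ⊕ Fin 1 → ℝ := Sum.elim (fun _ => 0) (fun _ => 1) with he
    have hdecomp : convDiffM d n b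
        = (1 / (2 * s)) • Matrix.vecMulVec v v
          + ((b ^ 2 / 2 + 2) / s) • Matrix.vecMulVec e e := by
      ext i j
      rcases i with i | i <;> rcases j with j | j <;>
        simp only [Matrix.add_apply, Matrix.smul_apply, Matrix.vecMulVec_apply, hv, he,
          Sum.elim_inl, Sum.elim_inr, smul_eq_mul, M11, M12, M21, M22] <;>
        field_simp <;> ring
    rw [hdecomp]
    exact (posSemidef_smul (by positivity) (vecMulVec_posSemidef v)).add
      (posSemidef_smul (by positivity) (vecMulVec_posSemidef e))
  · ext i j
    rcases i with i | i <;> rcases j with j | j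
    · have e1 : ∀ k, convDiffM d n b (Sum.inl i) (Sum.inl k)
          * convDiffM d n b (Sum.inl k) (Sum.inl j)
          = (4 * (n i * n j) / (b ^ 2 + 4)) * n k ^ 2 := fun k => by
        rw [M11, M11, hmul]; ring
      simp only [Matrix.mul_apply, Fintype.sum_sum_type, Fin.sum_univ_one]
      simp only [e1]
      rw [← Finset.mul_sum, hn, mul_one]
      simp only [M12, M21, A11, A12, A21, hmul, zero_mul, Finset.sum_const_zero, zero_add]
      field_simp
      ring
    · have e1 : ∀ k, convDiffM d n b (Sum.inl i) (Sum.inl k)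
          * convDiffM d n b (Sum.inl k) (Sum.inr j)
          = (2 * b * n i / (b ^ 2 + 4)) * n k ^ 2 := fun k => by
        rw [M11, M12, hmul]; ring
      simp only [Matrix.mul_apply, Fintype.sum_sum_type, Fin.sum_univ_one]
      simp only [e1]
      rw [← Finset.mul_sum, hn, mul_one]
      simp only [M12, M22, A11, A12, A22, hmul, zero_mul, Finset.sum_const_zero, zero_add]
      field_simp
      ring
    · have e1 : ∀ k, convDiffM d n b (Sum.inr i) (Sum.inl k)
          * convDiffM d n b (Sum.inl k) (Sum.inl j)
          = (2 * b * n j / (b ^ 2 + 4)) * n k ^ 2 := fun k => by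
        rw [M21, M11, hmul]; ring
      simp only [Matrix.mul_apply, Fintype.sum_sum_type, Fin.sum_univ_one]
      simp only [e1]
      rw [← Finset.mul_sum, hn, mul_one]
      simp only [M21, M22, A11, A21, A22, hmul, zero_mul, mul_zero, Finset.sum_const_zero, zero_add]
      field_simp
      ring
    · have e1 : ∀ k, convDiffM d n b (Sum.inr i) (Sum.inl k)
          * convDiffM d n b (Sum.inl k) (Sum.inr j)
          = (b ^ 2 / (b ^ 2 + 4)) * n k ^ 2 := fun k => by
        rw [M21, M12, hmul]; ring
      have e2 : ∀ k, convDiffA d n b (Sum.inr i) (Sum.inl k)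
          * convDiffA d n b (Sum.inl k) (Sum.inr j) = n k ^ 2 := fun k => by
        rw [A21, A12]; ring
      simp only [Matrix.mul_apply, Fintype.sum_sum_type, Fin.sum_univ_one]
      simp only [e1, e2]
      rw [← Finset.mul_sum, hn, mul_one]
      simp only [M22, A22, hmul]
      field_simp
      ring
end
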